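/- Let c₂ = 2/(√2 − 1)². Let z ∈ (0,1) and let (Z_n)_{n≥0} be measurable functions Z_n : Ω → [0,1] with Z₀ ≡ z such that for every n ≥ 0 and every ω ∈ Ω: Z_{n+1}(ω) ≥ Z_n(ω)² if ω(n+1) = 1, and Z_{n+1}(ω) ≥ Z_n(ω)·√(2 − Z_n(ω)²) if ω(n+1) = 0. Then μ{ ω : Z_n(ω) → 0 as n → ∞ } ≤ c₂·(1 − z²)·( 1 + log₂( 1/(1 − z²) ) ). -/

import Mathlib

/-!
The two recursive bounds give `1 - Z_{n+1}² ≤ 2 (1 - Z_n²)` on a `1`-bit and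
`1 - Z_{n+1}² ≤ (1 - Z_n²)²` on a `0`-bit, so `1 - Z_n² ≤ 2^(-V_n)` for the walk `V_n` started at
`log₂ (1/(1 - z²))` that subtracts `1` on a `1`-bit and doubles on a `0`-bit. If `Z_n → 0`, this
walk reaches `(-∞, 1]`. The function `f v = 2 (1 + v) 2^(-v)` satisfies `f ≥ 1` on `[0, 1]` and
`f (v - 1) + f (2v) ≤ 2 f v` for `v ≥ 1` (Bernoulli's `1 + v ≤ 2^v`), so by induction on the
number of steps at most a fraction `f v` of the bit strings drive the walk from `v > 0` into
`(-∞, 1]`. Finally `f (log₂ (1/(1 - z²))) = 2 (1 - z²) (1 + log₂ (1/(1 - z²)))` and `c₂ ≥ 2`.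
-/

open MeasureTheory Filter Topology

/-- `μ` is the i.i.d. Bernoulli(1/2) product measure on `{0,1}^ℕ`,
characterized by its values on cylinder sets. -/
def IsBernoulliHalf (μ : Measure (ℕ → Bool)) : Prop :=
  ∀ (n : ℕ) (b : Fin n → Bool), μ {ω | ∀ i : Fin n, ω i = b i} = (2 : ENNReal)⁻¹ ^ n

open Finset

def bitStep (v : ℝ) (b : Bool) : ℝ := if b then v - 1 else 2 * v

def bitWalk (v : ℝ) : ℕ → (ℕ → Bool) → ℝ
  | 0, _ => v
  | k + 1, ω => bitStep (bitWalk v k ω) (ω k)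

theorem bitWalk_succ' (v : ℝ) (k : ℕ) (ω : ℕ → Bool) :
    bitWalk v (k + 1) ω = bitWalk (bitStep v (ω 0)) k (fun i => ω (i + 1)) := by
  induction k with
  | zero => rfl
  | succ k ih => rw [bitWalk, ih]; rfl

def WalkReachesOne : (n : ℕ) → ℝ → (Fin n → Bool) → Prop
  | 0, v, _ => v ≤ 1
  | n + 1, v, s => v ≤ 1 ∨ WalkReachesOne n (bitStep v (s 0)) (Fin.tail s)

theorem walkReachesOne_iff (n : ℕ) (v : ℝ) (ω : ℕ → Bool) :
    WalkReachesOne n v (fun i => ω i) ↔ ∃ k ≤ n, bitWalk v k ω ≤ 1 := by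
  induction n generalizing v ω with
  | zero => simp [WalkReachesOne, bitWalk]
  | succ n ih =>
    have ih' := ih (bitStep v (ω 0)) (fun i => ω (i + 1))
    simp only [WalkReachesOne]
    constructor
    · rintro (h | h)
      · exact ⟨0, Nat.zero_le _, h⟩
      · obtain ⟨k, hk, h⟩ := ih'.1 h
        exact ⟨k + 1, by omega, by rwa [bitWalk_succ']⟩
    · rintro ⟨_ | k, hk, h⟩
      · exact Or.inl h
      · rw [bitWalk_succ'] at h
        exact Or.inr (ih'.2 ⟨k, by omega, h⟩)

theorem two_rpow_neg_sub_one (v : ℝ) : (2 : ℝ) ^ (-(v - 1)) = 2 * 2 ^ (-v) := by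
  rw [neg_sub, sub_eq_add_neg, Real.rpow_add two_pos, Real.rpow_one]

theorem two_rpow_neg_two_mul (v : ℝ) : (2 : ℝ) ^ (-(2 * v)) = (2 ^ (-v)) ^ 2 := by
  rw [← Real.rpow_natCast, ← Real.rpow_mul two_pos.le]
  ring_nf

noncomputable def walkBound (v : ℝ) : ℝ := 2 * (1 + v) * (2 : ℝ) ^ (-v)

theorem one_le_walkBound {v : ℝ} (h0 : 0 ≤ v) (h1 : v ≤ 1) : 1 ≤ walkBound v := by
  have : (2 : ℝ) ^ (-1 : ℝ) ≤ (2 : ℝ) ^ (-v) :=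
    Real.rpow_le_rpow_of_exponent_le one_le_two (by linarith)
  rw [Real.rpow_neg_one] at this
  unfold walkBound
  nlinarith

theorem walkBound_sub_one_add_walkBound_two_mul_le {v : ℝ} (hv : 1 ≤ v) :
    walkBound (v - 1) + walkBound (2 * v) ≤ 2 * walkBound v := by
  have hbern : 1 + v ≤ (2 : ℝ) ^ v := by
    simpa [one_add_one_eq_two] using one_add_mul_self_le_rpow_one_add (s := 1) (by norm_num) hv
  have hw : 0 < (2 : ℝ) ^ (-v) := by positivity
  have hinv : (2 : ℝ) ^ v * (2 : ℝ) ^ (-v) = 1 := by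
    rw [← Real.rpow_add two_pos]; simp
  unfold walkBound
  rw [two_rpow_neg_sub_one, two_rpow_neg_two_mul]
  nlinarith

theorem Finset.card_filter_bool_tuple_succ {n : ℕ} (P : (Fin (n + 1) → Bool) → Prop)
    [DecidablePred P] :
    #{s | P s} = #{t | P (Fin.cons true t)} + #{t | P (Fin.cons false t)} := by
  simp only [card_filter]
  rw [← (Fin.consEquiv fun _ => Bool).sum_comp, Fintype.sum_prod_type, Fintype.sum_bool]
  rfl

open Classical in
theorem card_walkReachesOne_le (n : ℕ) {v : ℝ} (hv : 0 < v) :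
    (#{s | WalkReachesOne n v s} : ℝ) ≤ 2 ^ n * walkBound v := by
  have of_le_one (m : ℕ) {w : ℝ} (hw0 : 0 < w) (hw1 : w ≤ 1) :
      (#{s | WalkReachesOne m w s} : ℝ) ≤ 2 ^ m * walkBound w :=
    calc (#{s | WalkReachesOne m w s} : ℝ) ≤ #(univ : Finset (Fin m → Bool)) := by
          exact_mod_cast card_filter_le _ _
      _ = 2 ^ m := by simp
      _ ≤ 2 ^ m * walkBound w :=
          le_mul_of_one_le_right (by positivity) (one_le_walkBound hw0.le hw1)
  induction n generalizing v with
  | zero =>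
    rcases le_or_gt v 1 with hv1 | hv1
    · exact of_le_one 0 hv hv1
    · have : 0 ≤ walkBound v := by unfold walkBound; positivity
      simpa [WalkReachesOne, hv1.not_ge] using this
  | succ n ih =>
    rcases le_or_gt v 1 with hv1 | hv1
    · exact of_le_one (n + 1) hv hv1
    simp only [WalkReachesOne, hv1.not_ge, false_or, Fin.cons_zero, Fin.tail_cons,
      card_filter_bool_tuple_succ, bitStep, if_true, Bool.false_eq_true, if_false]
    push_cast
    calc (#{t | WalkReachesOne n (v - 1) t} : ℝ) + #{t | WalkReachesOne n (2 * v) t}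
        ≤ 2 ^ n * walkBound (v - 1) + 2 ^ n * walkBound (2 * v) :=
          add_le_add (ih (by linarith)) (ih (by linarith))
      _ ≤ 2 ^ n * (2 * walkBound v) := by
          rw [← mul_add]
          exact mul_le_mul_of_nonneg_left
            (walkBound_sub_one_add_walkBound_two_mul_le hv1.le) (by positivity)
      _ = 2 ^ (n + 1) * walkBound v := by ring

theorem IsBernoulliHalf.measure_setOf_restrict_le {μ : Measure (ℕ → Bool)}
    (hμ : IsBernoulliHalf μ) (n : ℕ) (P : (Fin n → Bool) → Prop) [DecidablePred P] :
    μ {ω | P (fun i => ω i)} ≤ #{s | P s} * 2⁻¹ ^ n :=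
  calc μ {ω | P (fun i => ω i)} ≤ μ (⋃ s ∈ ({s | P s} : Finset _), {ω | ∀ i : Fin n, ω i = s i}) :=
        measure_mono fun ω hω => Set.mem_biUnion (by simpa using hω) fun _ => rfl
    _ ≤ ∑ s ∈ ({s | P s} : Finset _), μ {ω | ∀ i : Fin n, ω i = s i} :=
        measure_biUnion_finset_le _ _
    _ = #{s | P s} * 2⁻¹ ^ n := by simp [hμ n]

open Classical in
theorem IsBernoulliHalf.measure_exists_bitWalk_le_one_le {μ : Measure (ℕ → Bool)}
    (hμ : IsBernoulliHalf μ) {v : ℝ} (hv : 0 < v) :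
    μ {ω | ∃ k, bitWalk v k ω ≤ 1} ≤ ENNReal.ofReal (walkBound v) := by
  have hunion : {ω | ∃ k, bitWalk v k ω ≤ 1} = ⋃ n, {ω | ∃ k ≤ n, bitWalk v k ω ≤ 1} := by
    ext ω
    simp only [Set.mem_iUnion]
    exact ⟨fun ⟨k, hk⟩ => ⟨k, k, le_rfl, hk⟩, fun ⟨_, k, _, hk⟩ => ⟨k, hk⟩⟩
  have hmono : Monotone fun n => {ω | ∃ k ≤ n, bitWalk v k ω ≤ 1} :=
    fun _ _ hmn _ ⟨k, hk, h⟩ => ⟨k, hk.trans hmn, h⟩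
  rw [hunion, hmono.measure_iUnion]
  refine iSup_le fun n => ?_
  simp_rw [← walkReachesOne_iff]
  have hcount : (#{s | WalkReachesOne n v s} : ℝ) * 2⁻¹ ^ n ≤ walkBound v := by
    have := card_walkReachesOne_le n hv
    rw [inv_pow, ← div_eq_mul_inv, div_le_iff₀ (by positivity)]
    linarith
  calc μ {ω | WalkReachesOne n v fun i => ω i} ≤ #{s | WalkReachesOne n v s} * 2⁻¹ ^ n :=
        hμ.measure_setOf_restrict_le n _
    _ = ENNReal.ofReal (#{s | WalkReachesOne n v s} * 2⁻¹ ^ n) := by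
        rw [ENNReal.ofReal_mul (by positivity), ENNReal.ofReal_natCast, ENNReal.ofReal_pow
          (by norm_num), ENNReal.ofReal_inv_of_pos two_pos, ENNReal.ofReal_ofNat]
    _ ≤ ENNReal.ofReal (walkBound v) := ENNReal.ofReal_le_ofReal hcount

theorem one_sub_sq_le_two_mul_of_sq_le {x y : ℝ} (h : x ^ 2 ≤ y) :
    1 - y ^ 2 ≤ 2 * (1 - x ^ 2) := by
  have := pow_le_pow_left₀ (sq_nonneg x) h 2
  nlinarith [sq_nonneg (1 - x ^ 2)]

theorem one_sub_sq_le_sq_of_mul_sqrt_le {x y : ℝ} (hx0 : 0 ≤ x) (hx2 : x ^ 2 ≤ 2)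
    (h : x * Real.sqrt (2 - x ^ 2) ≤ y) : 1 - y ^ 2 ≤ (1 - x ^ 2) ^ 2 := by
  have := pow_le_pow_left₀ (by positivity) h 2
  rw [mul_pow, Real.sq_sqrt (by linarith)] at this
  nlinarith

theorem one_sub_sq_le_two_rpow_neg_bitWalk {x : ℕ → ℝ} {ω : ℕ → Bool} {v : ℝ}
    (hx : ∀ n, x n ∈ Set.Icc (0 : ℝ) 1) (h0 : 1 - x 0 ^ 2 ≤ 2 ^ (-v))
    (hrec : ∀ n, (ω n = true → x n ^ 2 ≤ x (n + 1)) ∧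
      (ω n = false → x n * Real.sqrt (2 - x n ^ 2) ≤ x (n + 1))) (n : ℕ) :
    1 - x n ^ 2 ≤ 2 ^ (-bitWalk v n ω) := by
  induction n with
  | zero => exact h0
  | succ n ih =>
    obtain ⟨hx0, hx1⟩ := hx n
    rw [bitWalk, bitStep]
    cases hb : ω n
    · calc 1 - x (n + 1) ^ 2 ≤ (1 - x n ^ 2) ^ 2 :=
            one_sub_sq_le_sq_of_mul_sqrt_le hx0 (by nlinarith) ((hrec n).2 hb)
        _ ≤ (2 ^ (-bitWalk v n ω)) ^ 2 := pow_le_pow_left₀ (by nlinarith) ih 2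
        _ = 2 ^ (-(2 * bitWalk v n ω)) := (two_rpow_neg_two_mul _).symm
    · calc 1 - x (n + 1) ^ 2 ≤ 2 * (1 - x n ^ 2) := one_sub_sq_le_two_mul_of_sq_le ((hrec n).1 hb)
        _ ≤ 2 * 2 ^ (-bitWalk v n ω) := by linarith
        _ = 2 ^ (-(bitWalk v n ω - 1)) := (two_rpow_neg_sub_one _).symm

theorem exists_le_one_of_one_sub_sq_le_two_rpow_neg {x w : ℕ → ℝ}
    (hxw : ∀ n, 1 - x n ^ 2 ≤ 2 ^ (-w n)) (hx : Tendsto x atTop (𝓝 0)) : ∃ n, w n ≤ 1 := by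
  have hsq : Tendsto (fun n => x n ^ 2) atTop (𝓝 0) := by simpa using hx.pow 2
  obtain ⟨n, hn⟩ := (hsq.eventually (gt_mem_nhds (by norm_num : (0 : ℝ) < 1 / 2))).exists
  have : (2 : ℝ) ^ (-1 : ℝ) < 2 ^ (-w n) := by
    rw [Real.rpow_neg_one]
    linarith [hxw n]
  exact ⟨n, by linarith [(Real.rpow_lt_rpow_left_iff one_lt_two).1 this]⟩

theorem stmt12_general (μ : Measure (ℕ → Bool)) (hμ : IsBernoulliHalf μ)
    (z : ℝ) (hz : z ∈ Set.Ioo (0:ℝ) 1)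
    (Z : ℕ → (ℕ → Bool) → ℝ)
    (hZrange : ∀ n ω, Z n ω ∈ Set.Icc (0:ℝ) 1)
    (hZ0 : ∀ ω, Z 0 ω = z)
    (hrec : ∀ (n : ℕ) (ω : ℕ → Bool),
      (ω n = true → (Z n ω) ^ 2 ≤ Z (n + 1) ω) ∧
      (ω n = false → Z n ω * Real.sqrt (2 - (Z n ω) ^ 2) ≤ Z (n + 1) ω)) :
    μ {ω | Tendsto (fun n => Z n ω) atTop (nhds 0)} ≤
      ENNReal.ofReal ((2 / (Real.sqrt 2 - 1) ^ 2) * (1 - z ^ 2) *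
        (1 + Real.logb 2 (1 / (1 - z ^ 2)))) := by
  obtain ⟨hz0, hz1⟩ := hz
  have hu0 : 0 < 1 - z ^ 2 := by nlinarith
  set v := Real.logb 2 (1 / (1 - z ^ 2)) with hv_def
  have hv : 0 < v := Real.logb_pos one_lt_two ((one_lt_div hu0).2 (by nlinarith))
  have hpow : (2 : ℝ) ^ (-v) = 1 - z ^ 2 := by
    rw [hv_def, one_div, Real.logb_inv, neg_neg, Real.rpow_logb two_pos (by norm_num) hu0]
  have hc : 2 ≤ 2 / (Real.sqrt 2 - 1) ^ 2 := by
    have h1 : 1 < Real.sqrt 2 := by rw [Real.lt_sqrt] <;> norm_num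
    have h2 : Real.sqrt 2 < 2 := by rw [Real.sqrt_lt'] <;> norm_num
    rw [le_div_iff₀ (by nlinarith)]
    nlinarith
  calc μ {ω | Tendsto (fun n => Z n ω) atTop (nhds 0)} ≤ μ {ω | ∃ k, bitWalk v k ω ≤ 1} :=
        measure_mono fun ω hω => exists_le_one_of_one_sub_sq_le_two_rpow_neg
          (one_sub_sq_le_two_rpow_neg_bitWalk (fun n => hZrange n ω) (by rw [hZ0, hpow])
            (fun n => hrec n ω)) hω
    _ ≤ ENNReal.ofReal (walkBound v) := hμ.measure_exists_bitWalk_le_one_le hv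
    _ ≤ _ := by
        refine ENNReal.ofReal_le_ofReal ?_
        rw [walkBound, hpow, mul_right_comm]
        gcongr

theorem stmt12 (μ : Measure (ℕ → Bool)) [IsProbabilityMeasure μ] (hμ : IsBernoulliHalf μ)
    (z : ℝ) (hz : z ∈ Set.Ioo (0:ℝ) 1)
    (Z : ℕ → (ℕ → Bool) → ℝ) (hZmeas : ∀ n, Measurable (Z n))
    (hZrange : ∀ n ω, Z n ω ∈ Set.Icc (0:ℝ) 1)
    (hZ0 : ∀ ω, Z 0 ω = z)
    (hrec : ∀ (n : ℕ) (ω : ℕ → Bool),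
      (ω n = true → (Z n ω) ^ 2 ≤ Z (n + 1) ω) ∧
      (ω n = false → Z n ω * Real.sqrt (2 - (Z n ω) ^ 2) ≤ Z (n + 1) ω)) :
    μ {ω | Tendsto (fun n => Z n ω) atTop (nhds 0)} ≤
      ENNReal.ofReal ((2 / (Real.sqrt 2 - 1) ^ 2) * (1 - z ^ 2) *
        (1 + Real.logb 2 (1 / (1 - z ^ 2)))) :=
  stmt12_general μ hμ z hz Z hZrange hZ0 hrec
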